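/- arXiv:1909.10435 — 9 statements merged into one kernel-verified Lean document; each statement's English description precedes it below -/
import Mathlib

section
/- If A ⊆ P([n]) is a nonempty down-set, then the number of pairs {x,y} of distinct sets in A whose symmetric difference has size at most 1 is at most |A| · ⌊log₂ |A|⌋. -/
/-!
Every pair at symmetric distance one has the form `{x, x.erase a}` with `a ∈ x ∈ A`, so there
are at most `∑ x ∈ A, |x|` such pairs. In a down-set each `x ∈ A` brings its whole power set
into `A`, hence `2 ^ |x| ≤ |A|`, i.e. `|x| ≤ ⌊log₂ |A|⌋`.
-/

open Finset

namespace Finset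

variable {α : Type*}

theorem exists_erase_eq_of_card_symmDiff_le_one [DecidableEq α] {x y : Finset α} (hxy : x ≠ y)
    (h : #(symmDiff x y) ≤ 1) :
    (∃ a ∈ x, y = x.erase a) ∨ ∃ a ∈ y, x = y.erase a := by
  have hne : (symmDiff x y).Nonempty := by
    rw [nonempty_iff_ne_empty, Ne, ← bot_eq_empty, symmDiff_eq_bot]
    exact hxy
  obtain ⟨a, ha⟩ := card_eq_one.mp (le_antisymm h hne.card_pos)
  have hmem : ∀ b, (b ∈ x ∧ b ∉ y ∨ b ∈ y ∧ b ∉ x) ↔ b = a := fun b => by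
    rw [← mem_symmDiff, ha, mem_singleton]
  rcases (hmem a).mpr rfl with ⟨hax, -⟩ | ⟨hay, -⟩
  · refine .inl ⟨a, hax, ?_⟩
    ext b
    have := hmem b
    rw [mem_erase]
    grind
  · refine .inr ⟨a, hay, ?_⟩
    ext b
    have := hmem b
    rw [mem_erase]
    grind

theorem ncard_symmDiff_card_le_one_pairs_le_sum_card [DecidableEq α] (A : Finset (Finset α)) :
    {e : Sym2 (Finset α) | ∃ x ∈ A, ∃ y ∈ A,
        e = s(x, y) ∧ x ≠ y ∧ #(symmDiff x y) ≤ 1}.ncard ≤ ∑ x ∈ A, #x := by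
  let eraseEdge : (Σ _ : Finset α, α) → Sym2 (Finset α) := fun p => s(p.1, p.1.erase p.2)
  have hcover : {e : Sym2 (Finset α) | ∃ x ∈ A, ∃ y ∈ A,
      e = s(x, y) ∧ x ≠ y ∧ #(symmDiff x y) ≤ 1} ⊆ ((A.sigma id).image eraseEdge : Set _) := by
    rintro e ⟨x, hx, y, hy, rfl, hxy, h⟩
    simp only [coe_image, Set.mem_image, mem_coe, mem_sigma, id, Sigma.exists]
    rcases exists_erase_eq_of_card_symmDiff_le_one hxy h with ⟨a, ha, rfl⟩ | ⟨a, ha, rfl⟩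
    · exact ⟨x, a, ⟨hx, ha⟩, rfl⟩
    · exact ⟨y, a, ⟨hy, ha⟩, Sym2.eq_swap⟩
  calc _ ≤ ((A.sigma id).image eraseEdge : Set _).ncard := Set.ncard_le_ncard hcover
    _ ≤ #(A.sigma id) := by rw [Set.ncard_coe_finset]; exact card_image_le
    _ = ∑ x ∈ A, #x := card_sigma _ _

theorem card_le_log_card_of_isLowerSet {A : Finset (Finset α)}
    (hA : IsLowerSet (A : Set (Finset α))) {x : Finset α} (hx : x ∈ A) :
    #x ≤ Nat.log 2 #A := by
  have hpow : x.powerset ⊆ A := fun y hy => hA (mem_powerset.mp hy) hx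
  refine (Nat.le_log_iff_pow_le one_lt_two (card_ne_zero_of_mem hx)).mpr ?_
  calc 2 ^ #x = #x.powerset := (card_powerset x).symm
    _ ≤ #A := card_le_card hpow

theorem sum_card_le_card_mul_log_card_of_isLowerSet {A : Finset (Finset α)}
    (hA : IsLowerSet (A : Set (Finset α))) :
    ∑ x ∈ A, #x ≤ #A * Nat.log 2 #A := by
  simpa using sum_le_sum fun x hx => card_le_log_card_of_isLowerSet hA hx

end Finset

theorem stmt3_general (A : Finset (Finset ℕ))
    (hdown : ∀ x ∈ A, ∀ y ⊆ x, y ∈ A) :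
    {e : Sym2 (Finset ℕ) | ∃ x ∈ A, ∃ y ∈ A,
        e = s(x, y) ∧ x ≠ y ∧ (symmDiff x y).card ≤ 1}.ncard
      ≤ A.card * Nat.log 2 A.card := by
  have hA : IsLowerSet (A : Set (Finset ℕ)) := fun x y hyx hx => hdown x hx y hyx
  exact (ncard_symmDiff_card_le_one_pairs_le_sum_card A).trans
    (sum_card_le_card_mul_log_card_of_isLowerSet hA)

theorem stmt3 (n : ℕ) (A : Finset (Finset ℕ)) (hA : A.Nonempty)
    (hsub : ∀ x ∈ A, x ⊆ Finset.Icc 1 n)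
    (hdown : ∀ x ∈ A, ∀ y ⊆ x, y ∈ A) :
    {e : Sym2 (Finset ℕ) | ∃ x ∈ A, ∃ y ∈ A,
        e = s(x, y) ∧ x ≠ y ∧ (symmDiff x y).card ≤ 1}.ncard
      ≤ A.card * Nat.log 2 A.card :=
  stmt3_general A hdown
end

section
/- For all nonnegative real numbers i and j, i^i · j^j ≥ ((i+j)/2)^{i+j}, where by convention 0^0 = 1. -/
theorem stmt4 (i j : ℝ) (hi : 0 ≤ i) (hj : 0 ≤ j) :
    ((i + j) / 2) ^ (i + j) ≤ i ^ i * j ^ j := by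
  rcases eq_or_lt_of_le hi with h0 | hi'
  · subst h0
    simp only [zero_add, Real.rpow_zero, one_mul]
    exact Real.rpow_le_rpow (by positivity) (by linarith) hj
  rcases eq_or_lt_of_le hj with h0 | hj'
  · subst h0
    simp only [add_zero, Real.rpow_zero, mul_one]
    exact Real.rpow_le_rpow (by positivity) (by linarith) hi
  -- both positive
  have hmid : (0:ℝ) < (i + j) / 2 := by linarith
  have hconv := Real.convexOn_mul_log.2 (Set.mem_Ici.2 hi) (Set.mem_Ici.2 hj)
      (by norm_num : (0:ℝ) ≤ 1/2) (by norm_num : (0:ℝ) ≤ 1/2) (by norm_num)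
  simp only [smul_eq_mul] at hconv
  have hlog : (i + j) * Real.log ((i + j) / 2) ≤ i * Real.log i + j * Real.log j := by
    have h2 : (1/2 : ℝ) * i + (1/2 : ℝ) * j = (i + j) / 2 := by ring
    rw [h2] at hconv
    nlinarith [hconv]
  have hL : (0:ℝ) < ((i + j) / 2) ^ (i + j) := Real.rpow_pos_of_pos hmid _
  have hR : (0:ℝ) < i ^ i * j ^ j :=
    mul_pos (Real.rpow_pos_of_pos hi' _) (Real.rpow_pos_of_pos hj' _)
  rw [← Real.log_le_log_iff hL hR, Real.log_rpow hmid, Real.log_mul (ne_of_gt (Real.rpow_pos_of_pos hi' _)) (ne_of_gt (Real.rpow_pos_of_pos hj' _)), Real.log_rpow hi', Real.log_rpow hj']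
  exact hlog
end

section
/- For every positive integer m, every real λ ∈ [0,1), and every positive real K, we have (K/m)^m + (K/(m+1))^{m+1} ≥ (K/(m+λ))^{m+λ}. -/
/-!
Put `a = K / (m + λ)`. Convexity of `s ↦ a ^ s` bounds `a ^ (m + λ)` by
`(1 - λ) a ^ m + λ a ^ (m + 1)`. The first term is at most `(K / m) ^ m` because `a ≤ K / m`;
the second is at most `(K / (m + 1)) ^ (m + 1)` by Bernoulli's inequality in the form
`λ ≤ ((m + λ) / (m + 1)) ^ (m + 1)`.
-/

open Real

lemma rpow_add_le_convexCombination {b : ℝ} (hb : 0 < b) (x : ℝ) {t : ℝ} (ht0 : 0 ≤ t)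
    (ht1 : t ≤ 1) : b ^ (x + t) ≤ (1 - t) * b ^ x + t * b ^ (x + 1) := by
  have h := (convexOn_rpow_left hb).2 (Set.mem_univ x) (Set.mem_univ (x + 1))
    (sub_nonneg.2 ht1) ht0 (sub_add_cancel 1 t)
  rwa [smul_eq_mul, smul_eq_mul, show (1 - t) * x + t * (x + 1) = x + t by ring] at h

lemma le_rpow_add_div_add_one {x t : ℝ} (hx : 0 ≤ x) (hxt : 0 ≤ x + t) :
    t ≤ ((x + t) / (x + 1)) ^ (x + 1) := by
  have hx1 : 0 < x + 1 := by linarith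
  have hs : -1 ≤ (t - 1) / (x + 1) := by
    rw [le_div_iff₀ hx1]
    linarith
  have bernoulli := one_add_mul_self_le_rpow_one_add hs (by linarith : 1 ≤ x + 1)
  have h1 : 1 + (x + 1) * ((t - 1) / (x + 1)) = t := by field_simp; ring
  have h2 : 1 + (t - 1) / (x + 1) = (x + t) / (x + 1) := by field_simp; ring
  rwa [h1, h2] at bernoulli

lemma one_sub_mul_rpow_div_add_le {x t K : ℝ} (hx : 0 < x) (ht : 0 ≤ t) (hK : 0 ≤ K) :
    (1 - t) * (K / (x + t)) ^ x ≤ (K / x) ^ x := by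
  have ha : 0 ≤ K / (x + t) := by positivity
  calc (1 - t) * (K / (x + t)) ^ x ≤ (K / (x + t)) ^ x :=
        mul_le_of_le_one_left (rpow_nonneg ha x) (by linarith)
    _ ≤ (K / x) ^ x :=
        rpow_le_rpow ha (div_le_div_of_nonneg_left hK hx (by linarith)) hx.le

lemma mul_rpow_div_add_le {x t K : ℝ} (hx : 0 ≤ x) (hxt : 0 < x + t) (hK : 0 ≤ K) :
    t * (K / (x + t)) ^ (x + 1) ≤ (K / (x + 1)) ^ (x + 1) := by
  have ha : 0 ≤ K / (x + t) := by positivity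
  calc t * (K / (x + t)) ^ (x + 1)
      ≤ ((x + t) / (x + 1)) ^ (x + 1) * (K / (x + t)) ^ (x + 1) :=
        mul_le_mul_of_nonneg_right (le_rpow_add_div_add_one hx hxt.le) (rpow_nonneg ha _)
    _ = ((x + t) / (x + 1) * (K / (x + t))) ^ (x + 1) := (mul_rpow (by positivity) ha).symm
    _ = (K / (x + 1)) ^ (x + 1) := by
        congr 1
        field_simp

theorem stmt5 (m : ℕ) (hm : 1 ≤ m) (lam K : ℝ) (hl0 : 0 ≤ lam) (hl1 : lam < 1)
    (hK : 0 < K) :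
    (K / ((m : ℝ) + lam)) ^ ((m : ℝ) + lam)
      ≤ (K / (m : ℝ)) ^ (m : ℝ) + (K / ((m : ℝ) + 1)) ^ ((m : ℝ) + 1) := by
  have hm0 : (0 : ℝ) < m := by exact_mod_cast hm
  have hml : (0 : ℝ) < m + lam := by linarith
  calc (K / ((m : ℝ) + lam)) ^ ((m : ℝ) + lam)
      ≤ (1 - lam) * (K / (m + lam)) ^ (m : ℝ) + lam * (K / (m + lam)) ^ ((m : ℝ) + 1) :=
        rpow_add_le_convexCombination (div_pos hK hml) m hl0 hl1.le
    _ ≤ (K / (m : ℝ)) ^ (m : ℝ) + (K / ((m : ℝ) + 1)) ^ ((m : ℝ) + 1) :=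
        add_le_add (one_sub_mul_rpow_div_add_le hm0 hl0 hK.le)
          (mul_rpow_div_add_le hm0.le hml hK.le)
end

section
/- For all real x ∈ [e, 2e), one has x + x²/4 − e^{x/e} ≥ e²/4 + (2 − e/4)(x − e), and in particular x + x²/4 − e^{x/e} ≥ 0. -/
/-!
Writing `x = e (1 + s)` with `0 ≤ s ≤ 1`, the difference of the two sides of the first inequality
is `e (q s - exp s)`, where `q` is the quadratic with leading coefficient `e / 4` that agrees with
`exp` at `0` and `1`. The gap `q - exp` has second derivative `e / 2 - exp s`, so it is convex on
`[0, 1 - log 2]`, where its slope stays at least `q' 0 - 1 = 3e/4 - 2 > 0`, hence it increases from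
`0` there; it is concave on `[1 - log 2, 1]`, hence bounded below by its endpoint values, both `≥ 0`.
The second inequality follows because the first lower bound is positive when `e < 8`.
-/

open Real Set

noncomputable def expGap (s : ℝ) : ℝ :=
  1 + (3 * exp 1 / 4 - 1) * s + exp 1 / 4 * s ^ 2 - exp s

noncomputable def expGapDeriv (s : ℝ) : ℝ :=
  3 * exp 1 / 4 - 1 + exp 1 / 2 * s - exp s

lemma hasDerivAt_expGap (s : ℝ) : HasDerivAt expGap (expGapDeriv s) s :=
  (((((hasDerivAt_id' s).const_mul (3 * exp 1 / 4 - 1)).const_add 1).add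
    ((hasDerivAt_pow 2 s).const_mul (exp 1 / 4))).sub (hasDerivAt_exp s)).congr_deriv
    (by rw [expGapDeriv]; ring)

lemma hasDerivAt_expGapDeriv (s : ℝ) : HasDerivAt expGapDeriv (exp 1 / 2 - exp s) s :=
  ((((hasDerivAt_id' s).const_mul (exp 1 / 2)).const_add (3 * exp 1 / 4 - 1)).sub
    (hasDerivAt_exp s)).congr_deriv (by ring)

lemma exp_one_sub_log_two : exp (1 - log 2) = exp 1 / 2 := by
  rw [exp_sub, exp_log two_pos]

lemma log_two_lt_one : log 2 < 1 := log_two_lt_d9.trans (by norm_num)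

lemma expGap_monotoneOn : MonotoneOn expGap (Icc 0 (1 - log 2)) := by
  have hmono : MonotoneOn expGapDeriv (Iic (1 - log 2)) :=
    monotoneOn_of_hasDerivWithinAt_nonneg (convex_Iic _)
      (fun s _ ↦ (hasDerivAt_expGapDeriv s).continuousAt.continuousWithinAt)
      (fun s _ ↦ (hasDerivAt_expGapDeriv s).hasDerivWithinAt) fun s hs ↦ by
        rw [interior_Iic] at hs
        rw [sub_nonneg, ← exp_one_sub_log_two]
        exact exp_le_exp.2 hs.le
  have hderiv0 : 0 < expGapDeriv 0 := by
    have := exp_one_gt_d9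
    simp only [expGapDeriv, mul_zero, add_zero, exp_zero]
    linarith
  refine monotoneOn_of_hasDerivWithinAt_nonneg (convex_Icc _ _)
    (fun s _ ↦ (hasDerivAt_expGap s).continuousAt.continuousWithinAt)
    (fun s _ ↦ (hasDerivAt_expGap s).hasDerivWithinAt) fun s hs ↦ ?_
  rw [interior_Icc] at hs
  exact hderiv0.le.trans (hmono (by simp [log_two_lt_one.le]) hs.2.le hs.1.le)

lemma expGap_concaveOn : ConcaveOn ℝ (Ici (1 - log 2)) expGap :=
  concaveOn_of_hasDerivWithinAt2_nonpos (convex_Ici _)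
    (fun s _ ↦ (hasDerivAt_expGap s).continuousAt.continuousWithinAt)
    (fun s _ ↦ (hasDerivAt_expGap s).hasDerivWithinAt)
    (fun s _ ↦ (hasDerivAt_expGapDeriv s).hasDerivWithinAt) fun s hs ↦ by
      rw [interior_Ici] at hs
      rw [sub_nonpos, ← exp_one_sub_log_two]
      exact exp_le_exp.2 hs.le

lemma expGap_nonneg {s : ℝ} (hs0 : 0 ≤ s) (hs1 : s ≤ 1) : 0 ≤ expGap s := by
  have hc0 : 0 ≤ 1 - log 2 := by linarith [log_two_lt_one]
  have hc1 : 1 - log 2 ≤ 1 := by linarith [log_pos one_lt_two]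
  have hgap0 : expGap 0 = 0 := by simp [expGap]
  have hgap1 : expGap 1 = 0 := by simp [expGap]; ring
  have hgapc : 0 ≤ expGap (1 - log 2) :=
    hgap0 ▸ expGap_monotoneOn ⟨le_rfl, hc0⟩ ⟨hc0, le_rfl⟩ hc0
  rcases le_total s (1 - log 2) with hs | hs
  · exact hgap0 ▸ expGap_monotoneOn ⟨le_rfl, hc0⟩ ⟨hs0, hs⟩ hs0
  · have := expGap_concaveOn.min_le_of_mem_Icc (mem_Ici.2 le_rfl) (mem_Ici.2 hc1) ⟨hs, hs1⟩
    rw [hgap1] at this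
    exact le_min hgapc le_rfl |>.trans this

theorem stmt8 (x : ℝ) (h0 : Real.exp 1 ≤ x) (h1 : x < 2 * Real.exp 1) :
    (Real.exp 1) ^ 2 / 4 + (2 - Real.exp 1 / 4) * (x - Real.exp 1)
        ≤ x + x ^ 2 / 4 - Real.exp (x / Real.exp 1)
      ∧ 0 ≤ x + x ^ 2 / 4 - Real.exp (x / Real.exp 1) := by
  have he : 0 < exp 1 := exp_pos 1
  set s := x / exp 1 - 1 with hs
  have hx : x = exp 1 * (1 + s) := by rw [hs]; field_simp; ring
  have hs0 : 0 ≤ s := by rw [hs, sub_nonneg, one_le_div he]; exact h0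
  have hs1 : s ≤ 1 := by rw [hs, sub_le_iff_le_add, div_le_iff₀ he]; linarith
  have hgap := expGap_nonneg hs0 hs1
  have hkey : x + x ^ 2 / 4 - exp (x / exp 1) - ((exp 1) ^ 2 / 4 + (2 - exp 1 / 4) * (x - exp 1))
      = exp 1 * expGap s := by
    rw [show x / exp 1 = 1 + s by ring, exp_add, hx, expGap]; ring
  have hlower : 0 ≤ (exp 1) ^ 2 / 4 + (2 - exp 1 / 4) * (x - exp 1) := by
    have : exp 1 < 8 := exp_one_lt_d9.trans (by norm_num)
    have : 0 ≤ (2 - exp 1 / 4) * (x - exp 1) := mul_nonneg (by linarith) (by linarith)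
    positivity
  have hmain : (exp 1) ^ 2 / 4 + (2 - exp 1 / 4) * (x - exp 1)
      ≤ x + x ^ 2 / 4 - exp (x / exp 1) := by
    linarith [mul_nonneg he.le hgap]
  exact ⟨hmain, hlower.trans hmain⟩
end

section
/- For every integer m ≥ 2 and every real x ∈ [m·e, (m+1)·e) with (x/m)^m ≥ (x/(m+1))^{m+1}, one has e^{x/e} − (x/(m+1))^{m+1} ≤ (1/m)·(x/(m+1))^{m+1}. -/
/-!
Put `u = x / ((m + 1) e)`, so that `x / e = (m + 1) u` and `(x / (m + 1)) ^ (m + 1) = exp ((m + 1) (log u + 1))`.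
The range of `x` gives `m / (m + 1) ≤ u ≤ 1`, and `u - log u` decreases on `(0, 1]`, so it is at most its
value at `m / (m + 1)`. Taking logarithms, the claim `exp (x / e) ≤ (1 + 1 / m) (x / (m + 1)) ^ (m + 1)`
reduces to `m log (1 + 1 / m) ≤ 1`, which is `log t ≤ t - 1`.
-/

open Real

lemma sub_log_le_sub_log_of_le_of_le_one {a u : ℝ} (ha : 0 < a) (hau : a ≤ u) (hu : u ≤ 1) :
    u - log u ≤ a - log a := by
  have hu₀ : 0 < u := ha.trans_le hau
  have hlog := one_sub_inv_le_log_of_pos (div_pos hu₀ ha)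
  rw [log_div hu₀.ne' ha.ne', inv_div] at hlog
  have hfrac : u - a ≤ 1 - a / u := by
    rw [one_sub_div hu₀.ne', le_div_iff₀ hu₀]
    nlinarith
  linarith

lemma mul_log_one_add_inv_le_one {n : ℝ} (hn : 0 < n) : n * log (1 + n⁻¹) ≤ 1 :=
  calc n * log (1 + n⁻¹) ≤ n * n⁻¹ :=
        mul_le_mul_of_nonneg_left (by linarith [log_le_sub_one_of_pos (by positivity : 0 < 1 + n⁻¹)])
          hn.le
    _ = 1 := mul_inv_cancel₀ hn.ne'

theorem exp_div_exp_le_one_add_inv_mul_rpow {n y : ℝ} (hn : 0 < n) (hy₀ : n * exp 1 ≤ y)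
    (hy₁ : y ≤ (n + 1) * exp 1) :
    exp (y / exp 1) ≤ (1 + n⁻¹) * (y / (n + 1)) ^ (n + 1) := by
  have hn₁ : 0 < n + 1 := by linarith
  have he : 0 < exp 1 := exp_pos 1
  set u := y / (n + 1) / exp 1 with hu_def
  set a := n / (n + 1) with ha_def
  have hau : a ≤ u := by
    rw [hu_def, div_div, div_le_div_iff₀ hn₁ (by positivity)]
    nlinarith
  have hu₁ : u ≤ 1 := by
    rw [hu_def, div_div, div_le_one (by positivity)]
    linarith
  have ha : 0 < a := by positivity
  have hu : 0 < u := ha.trans_le hau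
  have hlog_a : log a = -log (1 + n⁻¹) := by
    rw [show 1 + n⁻¹ = a⁻¹ by rw [ha_def]; field_simp, log_inv, neg_neg]
  have hdecr := mul_le_mul_of_nonneg_left (sub_log_le_sub_log_of_le_of_le_one ha hau hu₁) hn₁.le
  rw [hlog_a] at hdecr
  have hna : (n + 1) * a = n := by rw [ha_def]; field_simp
  have hy : y / exp 1 = (n + 1) * u := by rw [hu_def]; field_simp
  have hpow : (y / (n + 1)) ^ (n + 1) = exp ((n + 1) * (log u + 1)) := by
    rw [show y / (n + 1) = u * exp 1 by rw [hu_def]; field_simp, rpow_def_of_pos (by positivity),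
      log_mul hu.ne' he.ne', log_exp, mul_comm]
  rw [hpow, ← exp_log (by positivity : 0 < 1 + n⁻¹), ← exp_add, exp_le_exp, hy]
  linarith [mul_log_one_add_inv_le_one hn]

theorem stmt9_general (m : ℕ) (hm : 2 ≤ m) (x : ℝ)
    (h0 : (m : ℝ) * Real.exp 1 ≤ x) (h1 : x < ((m : ℝ) + 1) * Real.exp 1) :
    Real.exp (x / Real.exp 1) - (x / ((m : ℝ) + 1)) ^ ((m : ℝ) + 1)
      ≤ (1 / (m : ℝ)) * (x / ((m : ℝ) + 1)) ^ ((m : ℝ) + 1) := by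
  have hm₀ : (0 : ℝ) < m := by exact_mod_cast (by omega : 0 < m)
  have h := exp_div_exp_le_one_add_inv_mul_rpow hm₀ h0 h1.le
  rw [add_mul, one_mul] at h
  rw [one_div]
  linarith

theorem stmt9 (m : ℕ) (hm : 2 ≤ m) (x : ℝ)
    (h0 : (m : ℝ) * Real.exp 1 ≤ x) (h1 : x < ((m : ℝ) + 1) * Real.exp 1)
    (hcase : (x / ((m : ℝ) + 1)) ^ ((m : ℝ) + 1) ≤ (x / (m : ℝ)) ^ (m : ℝ)) :
    Real.exp (x / Real.exp 1) - (x / ((m : ℝ) + 1)) ^ ((m : ℝ) + 1)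
      ≤ (1 / (m : ℝ)) * (x / ((m : ℝ) + 1)) ^ ((m : ℝ) + 1) :=
  stmt9_general m hm x h0 h1
end

section
/- For every integer m ≥ 2 and every real x ∈ [m·e, (m+1)·e) with (x/m)^m < (x/(m+1))^{m+1}, one has e^{x/e} − (x/m)^m ≤ (1/m)·(x/m)^m. -/
/-!
With `t = x / e`, the claim is `e ^ t ≤ (1 + 1/m) (e t / m) ^ m`, i.e.
`t ≤ log (1 + 1/m) + m (1 + log (t / m))`. Bounding `log (t / m) ≥ 1 - m / t` and
`log (1 + 1/m) ≥ 1 / (m + 1)` reduces this to `t + m² / t ≤ 2m + 1 / (m + 1)`: the left side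
is convex in `t`, and the inequality holds at `t = m` and with equality at `t = m + 1`.
-/

open Real

lemma inv_add_one_le_log_one_add_inv {a : ℝ} (ha : 0 < a) : (a + 1)⁻¹ ≤ log (1 + a⁻¹) := by
  have h := one_sub_inv_le_log_of_pos (x := 1 + a⁻¹) (by positivity)
  have : 1 - (1 + a⁻¹)⁻¹ = (a + 1)⁻¹ := by field_simp; ring
  rwa [this] at h

lemma add_sq_div_le_of_le_of_le_add_one {m t : ℝ} (hm : 0 < m) (hmt : m ≤ t)
    (htm : t ≤ m + 1) :
    t + m ^ 2 / t ≤ 2 * m + (m + 1)⁻¹ := by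
  have ht : 0 < t := hm.trans_le hmt
  have hgap : 2 * m + (m + 1)⁻¹ - (t + m ^ 2 / t) =
      (m + 1 - t) * ((m + 1) * t - m ^ 2) / ((m + 1) * t) := by
    field_simp
    ring
  have : 0 ≤ (m + 1 - t) * ((m + 1) * t - m ^ 2) / ((m + 1) * t) :=
    div_nonneg (mul_nonneg (by linarith) (by nlinarith)) (by positivity)
  linarith

lemma le_log_one_add_inv_add_mul_one_add_log_div {m t : ℝ} (hm : 0 < m) (hmt : m ≤ t)
    (htm : t ≤ m + 1) : t ≤ log (1 + m⁻¹) + m * (1 + log (t / m)) := by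
  have ht : 0 < t := hm.trans_le hmt
  have hlog : 1 - m / t ≤ log (t / m) := by
    simpa using one_sub_inv_le_log_of_pos (div_pos ht hm)
  calc t ≤ (m + 1)⁻¹ + m * (2 - m / t) := by
        have : m * (2 - m / t) = 2 * m - m ^ 2 / t := by ring
        linarith [add_sq_div_le_of_le_of_le_add_one hm hmt htm]
    _ ≤ log (1 + m⁻¹) + m * (1 + log (t / m)) := by
        gcongr
        · exact inv_add_one_le_log_one_add_inv hm
        · linarith

lemma exp_le_one_add_inv_mul_rpow {m t : ℝ} (hm : 0 < m) (hmt : m ≤ t) (htm : t ≤ m + 1) :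
    exp t ≤ (1 + m⁻¹) * (exp 1 * t / m) ^ m := by
  have ht : 0 < t := hm.trans_le hmt
  rw [rpow_def_of_pos (by positivity), log_div (by positivity) hm.ne', log_mul (exp_pos 1).ne'
    ht.ne', log_exp, ← exp_log (by positivity : (0 : ℝ) < 1 + m⁻¹), ← exp_add, exp_le_exp]
  have := le_log_one_add_inv_add_mul_one_add_log_div hm hmt htm
  rw [log_div ht.ne' hm.ne'] at this
  linarith

theorem stmt10_general (m : ℕ) (hm : 2 ≤ m) (x : ℝ)
    (h0 : (m : ℝ) * Real.exp 1 ≤ x) (h1 : x < ((m : ℝ) + 1) * Real.exp 1) :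
    Real.exp (x / Real.exp 1) - (x / (m : ℝ)) ^ (m : ℝ)
      ≤ (1 / (m : ℝ)) * (x / (m : ℝ)) ^ (m : ℝ) := by
  have hm : (0 : ℝ) < m := by exact_mod_cast (by omega : 0 < m)
  have he := exp_pos 1
  have key := exp_le_one_add_inv_mul_rpow hm ((le_div_iff₀ he).2 h0) ((div_le_iff₀ he).2 h1.le)
  rw [mul_div_cancel₀ x he.ne'] at key
  rw [one_div]
  linarith

theorem stmt10 (m : ℕ) (hm : 2 ≤ m) (x : ℝ)
    (h0 : (m : ℝ) * Real.exp 1 ≤ x) (h1 : x < ((m : ℝ) + 1) * Real.exp 1)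
    (hcase : (x / (m : ℝ)) ^ (m : ℝ) < (x / ((m : ℝ) + 1)) ^ ((m : ℝ) + 1)) :
    Real.exp (x / Real.exp 1) - (x / (m : ℝ)) ^ (m : ℝ)
      ≤ (1 / (m : ℝ)) * (x / (m : ℝ)) ^ (m : ℝ) :=
  stmt10_general m hm x h0 h1
end

section
/- If A ⊆ P([n]) is a left-compressed down-set, then the number of unordered pairs {x,y} of distinct sets in A with |x Δ y| ≤ 2 equals ∑_{x ∈ A} ‖x‖, where ‖x‖ = ∑_{j ∈ x} j. -/
/-- The "token" map: given `x`, `j ∈ x` and `i < j`, produce the lower neighbour. -/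
private def gg (x : Finset ℕ) (j i : ℕ) : Finset ℕ :=
  if i = 0 then x.erase j
  else if i ∈ x then (x.erase j).erase i
  else insert i (x.erase j)

private lemma gg_rank_lt {x : Finset ℕ} {j i : ℕ} (hx1 : ∀ k ∈ x, 1 ≤ k)
    (hj : j ∈ x) (hij : i < j) :
    ∑ k ∈ gg x j i, k < ∑ k ∈ x, k := by
  have hj1 : 1 ≤ j := hx1 j hj
  have e1 : ∑ k ∈ x.erase j, k + j = ∑ k ∈ x, k := Finset.sum_erase_add x (fun k => k) hj
  unfold gg
  split_ifs with h1 h2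
  · omega
  · have hi : i ∈ x.erase j := Finset.mem_erase.2 ⟨Nat.ne_of_lt hij, h2⟩
    have e2 : ∑ k ∈ (x.erase j).erase i, k + i = ∑ k ∈ x.erase j, k :=
      Finset.sum_erase_add _ (fun k => k) hi
    omega
  · have hni : i ∉ x.erase j := fun h => h2 (Finset.mem_of_mem_erase h)
    rw [Finset.sum_insert hni]
    omega

private lemma gg_symmDiff {x : Finset ℕ} {j i : ℕ} (_hj : j ∈ x) (_hij : i < j) :
    (symmDiff x (gg x j i)).card ≤ 2 := by
  have hsub2 : symmDiff x (gg x j i) ⊆ insert i {j} := by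
    intro a ha
    rw [Finset.mem_symmDiff] at ha
    unfold gg at ha
    split_ifs at ha <;>
      simp only [Finset.mem_erase, Finset.mem_insert, Finset.mem_singleton] at ha ⊢ <;>
      tauto
  calc (symmDiff x (gg x j i)).card ≤ (insert i ({j} : Finset ℕ)).card :=
        Finset.card_le_card hsub2
    _ ≤ 2 := by
        have := Finset.card_insert_le i ({j} : Finset ℕ)
        simpa using this

private lemma card_two_le {x : Finset ℕ} {a b : ℕ} (ha : a ∈ x) (hb : b ∈ x)
    (hab : a ≠ b) : 2 ≤ x.card := by
  have h : ({a, b} : Finset ℕ) ⊆ x := by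
    intro k hk
    simp only [Finset.mem_insert, Finset.mem_singleton] at hk
    rcases hk with rfl | rfl <;> assumption
  have := Finset.card_le_card h
  rwa [Finset.card_pair hab] at this

-- erase = erase
private lemma L1 {x : Finset ℕ} {j j' : ℕ} (hj : j ∈ x) (hj' : j' ∈ x)
    (h : x.erase j = x.erase j') : j = j' := by
  by_contra hne
  have : j ∈ x.erase j' := Finset.mem_erase.2 ⟨hne, hj⟩
  rw [← h] at this
  exact (Finset.mem_erase.1 this).1 rfl

-- erase = erase-erase : impossible
private lemma L2 {x : Finset ℕ} {j j' i' : ℕ} (hj : j ∈ x) (hj' : j' ∈ x)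
    (hi' : i' ∈ x) (hii' : i' < j')
    (h : x.erase j = (x.erase j').erase i') : False := by
  have h1 : (x.erase j).card = x.card - 1 := Finset.card_erase_of_mem hj
  have hi'e : i' ∈ x.erase j' := Finset.mem_erase.2 ⟨Nat.ne_of_lt hii', hi'⟩
  have h2 : ((x.erase j').erase i').card = x.card - 1 - 1 := by
    rw [Finset.card_erase_of_mem hi'e, Finset.card_erase_of_mem hj']
  have h3 : 2 ≤ x.card := card_two_le hi' hj' (Nat.ne_of_lt hii')
  rw [h, h2] at h1
  omega

-- erase = insert-erase : impossible
private lemma L3 {x : Finset ℕ} {j j' i' : ℕ} (hj : j ∈ x) (hj' : j' ∈ x)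
    (hi' : i' ∉ x) (h : x.erase j = insert i' (x.erase j')) : False := by
  have h1 : (x.erase j).card = x.card - 1 := Finset.card_erase_of_mem hj
  have hni : i' ∉ x.erase j' := fun hh => hi' (Finset.mem_of_mem_erase hh)
  have h2 : (insert i' (x.erase j')).card = x.card - 1 + 1 := by
    rw [Finset.card_insert_of_notMem hni, Finset.card_erase_of_mem hj']
  have h3 : 1 ≤ x.card := Finset.card_pos.2 ⟨j, hj⟩
  rw [h, h2] at h1
  omega

-- erase-erase = insert-erase : impossible
private lemma L5 {x : Finset ℕ} {j i j' i' : ℕ} (hj : j ∈ x) (hi : i ∈ x) (hij : i < j)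
    (hj' : j' ∈ x) (hi' : i' ∉ x)
    (h : (x.erase j).erase i = insert i' (x.erase j')) : False := by
  have hie : i ∈ x.erase j := Finset.mem_erase.2 ⟨Nat.ne_of_lt hij, hi⟩
  have h1 : ((x.erase j).erase i).card = x.card - 1 - 1 := by
    rw [Finset.card_erase_of_mem hie, Finset.card_erase_of_mem hj]
  have hni : i' ∉ x.erase j' := fun hh => hi' (Finset.mem_of_mem_erase hh)
  have h2 : (insert i' (x.erase j')).card = x.card - 1 + 1 := by
    rw [Finset.card_insert_of_notMem hni, Finset.card_erase_of_mem hj']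
  have h3 : 2 ≤ x.card := card_two_le hi hj (Nat.ne_of_lt hij)
  rw [h, h2] at h1
  omega

-- erase-erase = erase-erase
private lemma L4 {x : Finset ℕ} {j i j' i' : ℕ} (hj : j ∈ x) (hi : i ∈ x) (hij : i < j)
    (hj' : j' ∈ x) (hi' : i' ∈ x) (hij' : i' < j')
    (h : (x.erase j).erase i = (x.erase j').erase i') : j = j' ∧ i = i' := by
  have H : ∀ k, (k ∈ x ∧ k ≠ i ∧ k ≠ j) ↔ (k ∈ x ∧ k ≠ i' ∧ k ≠ j') := by
    intro k
    have hh := Finset.ext_iff.1 h k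
    simp only [Finset.mem_erase] at hh
    tauto
  have A1 := H j'
  have A2 := H i'
  have A3 := H j
  have A4 := H i
  simp only [hj, hi, hj', hi', true_and] at A1 A2 A3 A4
  omega

-- insert-erase = insert-erase
private lemma L6 {x : Finset ℕ} {j i j' i' : ℕ} (hj : j ∈ x) (hi : i ∉ x)
    (hj' : j' ∈ x) (hi' : i' ∉ x)
    (h : insert i (x.erase j) = insert i' (x.erase j')) : j = j' ∧ i = i' := by
  have H : ∀ k, (k = i ∨ (k ≠ j ∧ k ∈ x)) ↔ (k = i' ∨ (k ≠ j' ∧ k ∈ x)) := by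
    intro k
    have hh := Finset.ext_iff.1 h k
    simp only [Finset.mem_insert, Finset.mem_erase] at hh
    exact hh
  have hj'i' : j' ≠ i' := fun hh => hi' (hh ▸ hj')
  have hjj' : j = j' := by
    by_contra hne
    rcases (H j').1 (Or.inr ⟨fun hh => hne hh.symm, hj'⟩) with h1 | h1
    · exact hj'i' h1
    · exact h1.1 rfl
  have hii' : i = i' := by
    rcases (H i).1 (Or.inl rfl) with h1 | h1
    · exact h1
    · exact absurd h1.2 hi
  exact ⟨hjj', hii'⟩

private lemma gg_inj {x : Finset ℕ} {j i j' i' : ℕ}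
    (hj : j ∈ x) (hij : i < j) (hj' : j' ∈ x) (hij' : i' < j')
    (heq : gg x j i = gg x j' i') : j = j' ∧ i = i' := by
  by_cases c1 : i = 0
  · by_cases d1 : i' = 0
    · have h := L1 hj hj' (by simpa [gg, c1, d1] using heq)
      exact ⟨h, c1.trans d1.symm⟩
    · by_cases d2 : i' ∈ x
      · exact absurd (by simpa [gg, c1, d1, d2] using heq) (fun h => L2 hj hj' d2 hij' h)
      · exact absurd (by simpa [gg, c1, d1, d2] using heq) (fun h => L3 hj hj' d2 h)
  · by_cases c2 : i ∈ x
    · by_cases d1 : i' = 0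
      · have h : x.erase j' = (x.erase j).erase i := by simpa [gg, c1, c2, d1] using heq.symm
        exact absurd h (fun h => L2 hj' hj c2 hij h)
      · by_cases d2 : i' ∈ x
        · exact L4 hj c2 hij hj' d2 hij' (by simpa [gg, c1, c2, d1, d2] using heq)
        · exact absurd (by simpa [gg, c1, c2, d1, d2] using heq)
            (fun h => L5 hj c2 hij hj' d2 h)
    · by_cases d1 : i' = 0
      · have h : x.erase j' = insert i (x.erase j) := by simpa [gg, c1, c2, d1] using heq.symm
        exact absurd h (fun h => L3 hj' hj c2 h)
      · by_cases d2 : i' ∈ x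
        · have h : (x.erase j').erase i' = insert i (x.erase j) := by
            simpa [gg, c1, c2, d1, d2] using heq.symm
          exact absurd h (fun h => L5 hj' d2 hij' hj c2 h)
        · exact L6 hj c2 hj' d2 (by simpa [gg, c1, c2, d1, d2] using heq)

private lemma gg_mem {n : ℕ} {A : Finset (Finset ℕ)}
    (hsub : ∀ x ∈ A, x ⊆ Finset.Icc 1 n)
    (hdown : ∀ x ∈ A, ∀ y ⊆ x, y ∈ A)
    (hcomp : ∀ i j : ℕ, 1 ≤ i → i < j → j ≤ n →
      ∀ x ∈ A, j ∈ x → i ∉ x → insert i (x.erase j) ∈ A)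
    {x : Finset ℕ} {j i : ℕ} (hx : x ∈ A) (hj : j ∈ x) (hij : i < j) :
    gg x j i ∈ A := by
  unfold gg
  split_ifs with h1 h2
  · exact hdown x hx _ (fun k hk => Finset.mem_of_mem_erase hk)
  · exact hdown x hx _ (fun k hk => Finset.mem_of_mem_erase (Finset.mem_of_mem_erase hk))
  · exact hcomp i j (Nat.one_le_iff_ne_zero.2 h1) hij (Finset.mem_Icc.1 (hsub x hx hj)).2
      x hx hj h2

private lemma exists_token {n : ℕ} {x y : Finset ℕ}
    (hx1 : x ⊆ Finset.Icc 1 n) (hy1 : y ⊆ Finset.Icc 1 n)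
    (hne : x ≠ y) (hcard : (symmDiff x y).card ≤ 2)
    (hR : ∑ k ∈ y, k ≤ ∑ k ∈ x, k) :
    ∃ j ∈ x, ∃ i ∈ Finset.range j, y = gg x j i := by
  have hxpos : ∀ k ∈ x, 1 ≤ k := fun k hk => (Finset.mem_Icc.1 (hx1 hk)).1
  have hypos : ∀ k ∈ y, 1 ≤ k := fun k hk => (Finset.mem_Icc.1 (hy1 hk)).1
  have hcard2 : (x \ y).card + (y \ x).card ≤ 2 := by
    rwa [symmDiff_def, Finset.sup_eq_union,
      Finset.card_union_of_disjoint disjoint_sdiff_sdiff] at hcard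
  have Sx : ∑ k ∈ x ∩ y, k + ∑ k ∈ x \ y, k = ∑ k ∈ x, k :=
    Finset.sum_inter_add_sum_sdiff x y (fun k => k)
  have Sy : ∑ k ∈ x ∩ y, k + ∑ k ∈ y \ x, k = ∑ k ∈ y, k := by
    rw [Finset.inter_comm]; exact Finset.sum_inter_add_sum_sdiff y x (fun k => k)
  have hRR : ∑ k ∈ y \ x, k ≤ ∑ k ∈ x \ y, k := by omega
  have hne1 : x \ y ≠ ∅ := by
    intro h0
    have hxy : x ⊆ y := by rwa [← Finset.sdiff_eq_empty_iff_subset]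
    have hne2 : y \ x ≠ ∅ := by
      intro h1
      exact hne (Finset.Subset.antisymm hxy (Finset.sdiff_eq_empty_iff_subset.1 h1))
    obtain ⟨b, hb⟩ := Finset.nonempty_iff_ne_empty.2 hne2
    have hb1 : 1 ≤ b := hypos b (Finset.mem_sdiff.1 hb).1
    have hble : b ≤ ∑ k ∈ y \ x, k := Finset.single_le_sum (fun k _ => Nat.zero_le k) hb
    rw [h0] at hRR
    simp only [Finset.sum_empty] at hRR
    omega
  have hc1 : (x \ y).card = 1 ∨ (x \ y).card = 2 := by
    have := Finset.card_pos.2 (Finset.nonempty_iff_ne_empty.2 hne1)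
    omega
  rcases hc1 with hc1 | hc1
  · obtain ⟨j, hjx⟩ := Finset.card_eq_one.1 hc1
    have hj : j ∈ x ∧ j ∉ y := by
      rw [← Finset.mem_sdiff, hjx]; exact Finset.mem_singleton_self j
    have hj1 : 1 ≤ j := hxpos j hj.1
    have hc2 : (y \ x).card = 0 ∨ (y \ x).card = 1 := by omega
    rcases hc2 with hc2 | hc2
    · have hyx : y \ x = ∅ := Finset.card_eq_zero.1 hc2
      refine ⟨j, hj.1, 0, Finset.mem_range.2 hj1, ?_⟩
      have hgg : gg x j 0 = x.erase j := by simp [gg]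
      rw [hgg]
      ext k
      have h1 : (k ∈ x ∧ k ∉ y) ↔ k = j := by
        rw [← Finset.mem_sdiff, hjx, Finset.mem_singleton]
      have h2 : ¬(k ∈ y ∧ k ∉ x) := by rw [← Finset.mem_sdiff, hyx]; simp
      simp only [Finset.mem_erase]
      tauto
    · obtain ⟨b, hbx⟩ := Finset.card_eq_one.1 hc2
      have hb : b ∈ y ∧ b ∉ x := by
        rw [← Finset.mem_sdiff, hbx]; exact Finset.mem_singleton_self b
      have hb1 : 1 ≤ b := hypos b hb.1
      have hsums : ∑ k ∈ x \ y, k = j := by rw [hjx]; simp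
      have hsums' : ∑ k ∈ y \ x, k = b := by rw [hbx]; simp
      have hbj : b ≠ j := fun h => hb.2 (h ▸ hj.1)
      have hblt : b < j := by omega
      refine ⟨j, hj.1, b, Finset.mem_range.2 hblt, ?_⟩
      have hb0 : ¬ (b = 0) := by omega
      have hgg : gg x j b = insert b (x.erase j) := by simp [gg, hb0, hb.2]
      rw [hgg]
      ext k
      have h1 : (k ∈ x ∧ k ∉ y) ↔ k = j := by
        rw [← Finset.mem_sdiff, hjx, Finset.mem_singleton]
      have h2 : (k ∈ y ∧ k ∉ x) ↔ k = b := by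
        rw [← Finset.mem_sdiff, hbx, Finset.mem_singleton]
      simp only [Finset.mem_insert, Finset.mem_erase]
      constructor
      · intro hk
        by_cases hkx : k ∈ x
        · exact Or.inr ⟨fun hkj => hj.2 (hkj ▸ hk), hkx⟩
        · exact Or.inl (h2.1 ⟨hk, hkx⟩)
      · rintro (rfl | ⟨hkj, hkx⟩)
        · exact hb.1
        · by_contra hky; exact hkj (h1.1 ⟨hkx, hky⟩)
  · have hc2 : y \ x = ∅ := by
      have : (y \ x).card = 0 := by omega
      exact Finset.card_eq_zero.1 this
    obtain ⟨a, b, hab, habs⟩ := Finset.card_eq_two.1 hc1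
    have key : ∀ a b : ℕ, a < b → x \ y = {a, b} →
        ∃ j ∈ x, ∃ i ∈ Finset.range j, y = gg x j i := by
      intro a b hlt hxy
      have ha : a ∈ x ∧ a ∉ y := by rw [← Finset.mem_sdiff, hxy]; simp
      have hbb : b ∈ x ∧ b ∉ y := by rw [← Finset.mem_sdiff, hxy]; simp
      have ha1 : 1 ≤ a := hxpos a ha.1
      refine ⟨b, hbb.1, a, Finset.mem_range.2 hlt, ?_⟩
      have ha0 : ¬ (a = 0) := by omega
      have hgg : gg x b a = (x.erase b).erase a := by simp [gg, ha0, ha.1]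
      rw [hgg]
      ext k
      have h1 : (k ∈ x ∧ k ∉ y) ↔ (k = a ∨ k = b) := by
        rw [← Finset.mem_sdiff, hxy]; simp
      have h2 : ¬(k ∈ y ∧ k ∉ x) := by rw [← Finset.mem_sdiff, hc2]; simp
      simp only [Finset.mem_erase]
      tauto
    rcases Nat.lt_or_ge a b with h | h
    · exact key a b h habs
    · have hba : b < a := by omega
      exact key b a hba (by rw [habs, Finset.pair_comm])

theorem stmt11 (n : ℕ) (A : Finset (Finset ℕ))
    (hsub : ∀ x ∈ A, x ⊆ Finset.Icc 1 n)
    (hdown : ∀ x ∈ A, ∀ y ⊆ x, y ∈ A)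
    (hcomp : ∀ i j : ℕ, 1 ≤ i → i < j → j ≤ n →
      ∀ x ∈ A, j ∈ x → i ∉ x → insert i (x.erase j) ∈ A) :
    {e : Sym2 (Finset ℕ) | ∃ x ∈ A, ∃ y ∈ A,
        e = s(x, y) ∧ x ≠ y ∧ (symmDiff x y).card ≤ 2}.ncard
      = ∑ x ∈ A, ∑ j ∈ x, j := by
  classical
  have hpos : ∀ x ∈ A, ∀ k ∈ x, 1 ≤ k := fun x hx k hk => (Finset.mem_Icc.1 (hsub x hx hk)).1
  set E : Finset (Sym2 (Finset ℕ)) :=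
    ((A ×ˢ A).filter fun p => p.1 ≠ p.2 ∧ (symmDiff p.1 p.2).card ≤ 2).image
      fun p => s(p.1, p.2) with hE
  have hset : {e : Sym2 (Finset ℕ) | ∃ x ∈ A, ∃ y ∈ A,
      e = s(x, y) ∧ x ≠ y ∧ (symmDiff x y).card ≤ 2} = ↑E := by
    ext e
    simp only [hE, Finset.coe_image, Set.mem_image, Finset.mem_coe, Finset.mem_filter,
      Finset.mem_product, Set.mem_setOf_eq]
    constructor
    · rintro ⟨x, hx, y, hy, rfl, hne, hc⟩
      exact ⟨(x, y), ⟨⟨hx, hy⟩, hne, hc⟩, rfl⟩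
    · rintro ⟨⟨x, y⟩, ⟨⟨hx, hy⟩, hne, hc⟩, rfl⟩
      exact ⟨x, hx, y, hy, rfl, hne, hc⟩
  rw [hset, Set.ncard_coe_finset]
  have hbij : (A.sigma fun x => x.sigma fun j => Finset.range j).card = E.card := by
    refine Finset.card_bij (fun a _ => s(a.1, gg a.1 a.2.1 a.2.2)) ?_ ?_ ?_
    · rintro ⟨x, j, i⟩ ha
      simp only [Finset.mem_sigma, Finset.mem_range] at ha
      obtain ⟨hx, hj, hi⟩ := ha
      refine Finset.mem_image.2 ⟨(x, gg x j i),
        Finset.mem_filter.2 ⟨Finset.mem_product.2 ⟨hx, ?_⟩, ?_, ?_⟩, rfl⟩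
      · exact gg_mem hsub hdown hcomp hx hj hi
      · intro h
        have h' : x = gg x j i := h
        have hlt := gg_rank_lt (hpos x hx) hj hi
        rw [← h'] at hlt
        exact lt_irrefl _ hlt
      · exact gg_symmDiff hj hi
    · rintro ⟨x, j, i⟩ ha ⟨x', j', i'⟩ ha' h
      simp only [Finset.mem_sigma, Finset.mem_range] at ha ha'
      obtain ⟨hx, hj, hi⟩ := ha
      obtain ⟨hx', hj', hi'⟩ := ha'
      rw [Sym2.eq_iff] at h
      rcases h with ⟨rfl, h2⟩ | ⟨h1, h2⟩
      · obtain ⟨rfl, rfl⟩ := gg_inj hj hi hj' hi' h2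
        rfl
      · exfalso
        have h1' : x = gg x' j' i' := h1
        have h2' : gg x j i = x' := h2
        have l1 := gg_rank_lt (hpos x hx) hj hi
        have l2 := gg_rank_lt (hpos x' hx') hj' hi'
        rw [← h1', ← h2'] at l2
        omega
    · intro b hb
      obtain ⟨⟨x, y⟩, hp, rfl⟩ := Finset.mem_image.1 hb
      obtain ⟨hmem, hne, hc⟩ := Finset.mem_filter.1 hp
      obtain ⟨hx, hy⟩ := Finset.mem_product.1 hmem
      rcases le_total (∑ k ∈ y, k) (∑ k ∈ x, k) with h | h
      · obtain ⟨j, hj, i, hi, hy_eq⟩ := exists_token (hsub x hx) (hsub y hy) hne hc h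
        refine ⟨⟨x, j, i⟩, Finset.mem_sigma.2 ⟨hx, Finset.mem_sigma.2 ⟨hj, hi⟩⟩, ?_⟩
        show s(x, gg x j i) = s(x, y)
        rw [← hy_eq]
      · have hc' : (symmDiff y x).card ≤ 2 := by rwa [symmDiff_comm]
        obtain ⟨j, hj, i, hi, hx_eq⟩ := exists_token (hsub y hy) (hsub x hx)
          (Ne.symm hne) hc' h
        refine ⟨⟨y, j, i⟩, Finset.mem_sigma.2 ⟨hy, Finset.mem_sigma.2 ⟨hj, hi⟩⟩, ?_⟩
        show s(y, gg y j i) = s(x, y)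
        rw [← hx_eq]
        exact Sym2.eq_swap
  rw [← hbij]
  simp [Finset.card_sigma]
end

section
/- Let A be a nonempty family of k-element subsets of [n] with 1 ≤ log₂ |A| < n. Then the number of unordered pairs {x,y} ⊆ A with |x Δ y| = 2 is at most n · ℓ' · |A|, where ℓ' = min{ ⌈ log₂|A| / (log₂ n − log₂ log₂ |A|) ⌉, ⌊log₂ |A|⌋ }. -/
/-!
If `A` spans more than `n m |A|` edges, repeatedly deleting a vertex of degree at most `n m`
leaves a nonempty `B ⊆ A` of minimum degree greater than `n m`, and two counting arguments show
that such a `B` is large.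

Choosing a coordinate `i` on which two adjacent sets differ and splitting `B` according to `i`
costs every vertex at most `n` neighbours, so by induction on `m` we get `|B| ≥ 2^(m+1)`, which
exceeds `|A|` for `m = ⌊log₂ |A|⌋`.

Around a fixed `x₀ ∈ B`, every `y` in the sphere `S_j = {y | #(x₀ \ y) = j}` has at least
`(m - j) n` neighbours in `S_(j+1)`, while every `z ∈ S_(j+1)` has at most `(j+1)²` neighbours in
`S_j`. Double counting gives `m! n^m ≤ (m!)² |S_m|`, and `x₀ ∉ S_m`, so `n^m < m! |A|`. For
`m = ⌈log₂ |A| / (log₂ n - log₂ log₂ |A|)⌉ ≤ log₂ |A|` this contradicts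
`m! |A| ≤ (log₂ |A|)^m |A| ≤ n^m`.
-/

open Finset
open scoped Nat

namespace Finset

variable {α : Type*} [DecidableEq α]

theorem card_sdiff_eq_one_of_card_symmDiff_eq_two {y z : Finset α} (hc : #y = #z)
    (h : #(symmDiff y z) = 2) : #(y \ z) = 1 ∧ #(z \ y) = 1 := by
  rw [Finset.symmDiff_def, card_union_of_disjoint disjoint_sdiff_sdiff] at h
  have := card_sdiff_comm hc
  omega

theorem eq_of_sdiff_eq_of_sdiff_eq {y z z' : Finset α} (h₁ : y \ z = y \ z')
    (h₂ : z \ y = z' \ y) : z = z' := by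
  rw [← sup_inf_sdiff z y, ← sup_inf_sdiff z' y, inf_comm, inf_comm z',
    ← sdiff_sdiff_right_self, h₁, h₂, sdiff_sdiff_right_self]

omit [DecidableEq α] in
theorem subset_singleton_of_card_eq_one {s : Finset α} {i : α} (hs : #s = 1) (hi : i ∈ s) :
    s ⊆ {i} := fun t ht => mem_singleton.2 (card_le_one.1 hs.le t ht i hi)

theorem subset_or_disjoint_of_card_eq_one {s : Finset α} (t : Finset α) (hs : #s = 1) :
    s ⊆ t ∨ Disjoint s t := by
  obtain ⟨a, rfl⟩ := card_eq_one.1 hs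
  by_cases ha : a ∈ t
  · exact .inl (singleton_subset_iff.2 ha)
  · exact .inr (disjoint_singleton_left.2 ha)

theorem card_sdiff_inter_eq_add (x y z : Finset α) :
    #(x \ (y ∩ z)) = #(x \ z) + #(x ∩ (z \ y)) := by
  rw [← card_union_of_disjoint]
  · congr 1; ext; simp only [mem_sdiff, mem_inter, mem_union]; tauto
  · rw [disjoint_left]; simp only [mem_sdiff, mem_inter]; tauto

theorem card_sdiff_eq_add_one_iff {x y z : Finset α} (hyz : #(y \ z) = 1) :
    #(x \ z) = #(x \ y) + 1 ↔ y \ z ⊆ x ∧ Disjoint (z \ y) x := by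
  have key := card_sdiff_inter_eq_add x z y
  rw [inter_comm, card_sdiff_inter_eq_add] at key
  have h₁ : #(x ∩ (y \ z)) = 1 ↔ y \ z ⊆ x := by
    rw [← hyz, ← inter_eq_right]
    exact ⟨fun h => eq_of_subset_of_card_le inter_subset_right h.ge, congrArg card⟩
  have h₂ : #(x ∩ (z \ y)) = 0 ↔ Disjoint (z \ y) x := by
    rw [card_eq_zero, disjoint_iff_inter_eq_empty, inter_comm]
  have : #(x ∩ (y \ z)) ≤ 1 := hyz ▸ card_le_card inter_subset_right
  rw [← h₁, ← h₂]
  omega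

theorem card_le_mul_of_sdiff_subset {y X Y : Finset α} {C : Finset (Finset α)}
    (hC : ∀ z ∈ C, #(y \ z) = 1 ∧ #(z \ y) = 1 ∧ y \ z ⊆ X ∧ z \ y ⊆ Y) :
    #C ≤ #X * #Y := by
  calc #C ≤ #(X.powersetCard 1 ×ˢ Y.powersetCard 1) := by
        refine card_le_card_of_injOn (fun z => (y \ z, z \ y)) (fun z hz => ?_) ?_
        · obtain ⟨h₁, h₂, h₃, h₄⟩ := hC z hz
          simp only [coe_product, Set.mem_prod, mem_coe, mem_powersetCard]
          exact ⟨⟨h₃, h₁⟩, h₄, h₂⟩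
        · intro z _ z' _ h
          exact eq_of_sdiff_eq_of_sdiff_eq (Prod.ext_iff.1 h).1 (Prod.ext_iff.1 h).2
    _ = #X * #Y := by simp

end Finset

namespace SimpleGraph

variable {V : Type*} (G : SimpleGraph V) [DecidableRel G.Adj]

def edgesIn (s : Finset V) : Finset (Sym2 V) := {e ∈ s.sym2 | e ∈ G.edgeSet}

def degreeIn (s : Finset V) (x : V) : ℕ := #{y ∈ s | G.Adj x y}

theorem coe_edgesIn (s : Finset V) :
    (G.edgesIn s : Set (Sym2 V)) = {e | ∃ x ∈ s, ∃ y ∈ s, e = s(x, y) ∧ G.Adj x y} := by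
  ext e
  induction e using Sym2.ind with
  | h u v =>
    simp only [edgesIn, coe_filter, mk_mem_sym2_iff, mem_edgeSet, Set.mem_ofPred_eq]
    constructor
    · rintro ⟨⟨hu, hv⟩, huv⟩
      exact ⟨u, hu, v, hv, rfl, huv⟩
    · rintro ⟨x, hx, y, hy, he, hxy⟩
      rcases Sym2.eq_iff.1 he with ⟨rfl, rfl⟩ | ⟨rfl, rfl⟩
      · exact ⟨⟨hx, hy⟩, hxy⟩
      · exact ⟨⟨hy, hx⟩, hxy.symm⟩

theorem degreeIn_eq_add_degreeIn_filter (s : Finset V) (x : V) (p : V → Prop) [DecidablePred p] :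
    G.degreeIn s x = G.degreeIn {y ∈ s | p y} x + G.degreeIn {y ∈ s | ¬p y} x := by
  simp only [degreeIn, filter_filter]
  rw [← card_filter_add_card_filter_not (s := {y ∈ s | G.Adj x y}) p, filter_filter,
    filter_filter]
  congr 2 <;> ext <;> simp [and_comm]

theorem exists_adj_of_degreeIn_pos {s : Finset V} {x : V} (h : 0 < G.degreeIn s x) :
    ∃ y ∈ s, G.Adj x y := by
  simpa [degreeIn, filter_nonempty_iff] using card_pos.1 h

variable [DecidableEq V]

theorem card_edgesIn_le_erase_add (s : Finset V) (x : V) :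
    #(G.edgesIn s) ≤ #(G.edgesIn (s.erase x)) + G.degreeIn s x := by
  calc #(G.edgesIn s) ≤ #(G.edgesIn (s.erase x) ∪ {y ∈ s | G.Adj x y}.image (s(x, ·))) := by
        refine card_le_card fun e he => ?_
        induction e using Sym2.ind with
        | h u v =>
          simp only [edgesIn, mem_filter, mk_mem_sym2_iff, mem_edgeSet] at he
          obtain ⟨⟨hu, hv⟩, huv⟩ := he
          simp only [edgesIn, mem_union, mem_filter, mk_mem_sym2_iff, mem_edgeSet, mem_erase,
            mem_image]
          by_cases hux : u = x
          · exact .inr ⟨v, ⟨hv, hux ▸ huv⟩, hux ▸ rfl⟩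
          by_cases hvx : v = x
          · exact .inr ⟨u, ⟨hu, hvx ▸ huv.symm⟩, hvx ▸ Sym2.eq_swap⟩
          exact .inl ⟨⟨⟨hux, hu⟩, hvx, hv⟩, huv⟩
    _ ≤ _ := (card_union_le _ _).trans (Nat.add_le_add_left card_image_le _)

theorem exists_subset_forall_lt_degreeIn {c : ℕ} {s : Finset V} (hs : c * #s < #(G.edgesIn s)) :
    ∃ t ⊆ s, t.Nonempty ∧ ∀ x ∈ t, c < G.degreeIn t x := by
  induction s using Finset.strongInduction with
  | H s ih =>
    by_cases hmin : ∀ x ∈ s, c < G.degreeIn s x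
    · refine ⟨s, subset_rfl, nonempty_iff_ne_empty.2 fun h => ?_, hmin⟩
      simp [h, edgesIn] at hs
    · push Not at hmin
      obtain ⟨x, hx, hdeg⟩ := hmin
      have := G.card_edgesIn_le_erase_add s x
      rw [← card_erase_add_one hx, mul_add_one] at hs
      obtain ⟨t, hts, ht⟩ := ih (s.erase x) (erase_ssubset hx) (by omega)
      exact ⟨t, hts.trans (erase_subset x s), ht⟩

end SimpleGraph

theorem Real.pow_logb_mul_le_pow_of_div_le {b a x : ℝ} {m : ℕ} (hb : 1 < b) (ha : 0 < a)
    (hL : 0 < logb b a) (hx : 0 < x) (hden : 0 < logb b x - logb b (logb b a))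
    (h : logb b a / (logb b x - logb b (logb b a)) ≤ m) : logb b a ^ m * a ≤ x ^ m := by
  rw [div_le_iff₀ hden] at h
  rw [← Real.logb_le_logb hb (by positivity) (by positivity), Real.logb_mul (by positivity)
    ha.ne', Real.logb_pow, Real.logb_pow]
  linarith

section KleitmanWest

open SimpleGraph

variable {α : Type*} [DecidableEq α]

def kleitmanWestGraph (α : Type*) [DecidableEq α] : SimpleGraph (Finset α) where
  Adj x y := #(symmDiff x y) = 2
  symm := ⟨fun x y h => by rwa [symmDiff_comm]⟩
  loopless := ⟨fun x h => by simp at h⟩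

instance : DecidableRel (kleitmanWestGraph α).Adj :=
  fun x y => inferInstanceAs (Decidable (#(symmDiff x y) = 2))

@[simp]
theorem kleitmanWestGraph_adj {x y : Finset α} :
    (kleitmanWestGraph α).Adj x y ↔ #(symmDiff x y) = 2 := Iff.rfl

variable {U : Finset α} {k : ℕ} {A B : Finset (Finset α)}

theorem kleitmanWestGraph.card_sdiff_eq_one_of_adj {y z : Finset α} (hy : y ∈ U.powersetCard k)
    (hz : z ∈ U.powersetCard k) (h : (kleitmanWestGraph α).Adj y z) :
    #(y \ z) = 1 ∧ #(z \ y) = 1 :=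
  card_sdiff_eq_one_of_card_symmDiff_eq_two
    ((mem_powersetCard.1 hy).2.trans (mem_powersetCard.1 hz).2.symm) h

theorem degreeIn_kleitmanWestGraph_le_of_separated {z : Finset α} {i : α}
    (hB : B ⊆ U.powersetCard k) (hz : z ∈ U.powersetCard k) (hsep : ∀ w ∈ B, i ∈ w ↔ i ∉ z) :
    (kleitmanWestGraph α).degreeIn B z ≤ #U := by
  have hU : z ⊆ U := (mem_powersetCard.1 hz).1
  by_cases hi : i ∈ z
  · calc _ ≤ #({i} : Finset α) * #U := card_le_mul_of_sdiff_subset fun w hw => by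
          obtain ⟨hwB, hzw⟩ := mem_filter.1 hw
          obtain ⟨h₁, h₂⟩ := kleitmanWestGraph.card_sdiff_eq_one_of_adj hz (hB hwB) hzw
          exact ⟨h₁, h₂, subset_singleton_of_card_eq_one h₁
            (mem_sdiff.2 ⟨hi, fun hiw => (hsep w hwB).1 hiw hi⟩),
            sdiff_subset.trans (mem_powersetCard.1 (hB hwB)).1⟩
      _ = #U := by rw [card_singleton, one_mul]
  · calc _ ≤ #U * #({i} : Finset α) := card_le_mul_of_sdiff_subset fun w hw => by
          obtain ⟨hwB, hzw⟩ := mem_filter.1 hw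
          obtain ⟨h₁, h₂⟩ := kleitmanWestGraph.card_sdiff_eq_one_of_adj hz (hB hwB) hzw
          exact ⟨h₁, h₂, sdiff_subset.trans hU,
            subset_singleton_of_card_eq_one h₂ (mem_sdiff.2 ⟨(hsep w hwB).2 hi, hi⟩)⟩
      _ = #U := by rw [card_singleton, mul_one]

theorem two_pow_le_card_of_forall_lt_degreeIn (hB : B ⊆ U.powersetCard k) (hne : B.Nonempty)
    {m : ℕ} (hd : ∀ x ∈ B, #U * m < (kleitmanWestGraph α).degreeIn B x) : 2 ^ (m + 1) ≤ #B := by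
  induction m generalizing B with
  | zero =>
    obtain ⟨x, hx⟩ := hne
    obtain ⟨y, hy, hxy⟩ := exists_adj_of_degreeIn_pos _ (hd x hx)
    exact one_lt_card.2 ⟨x, hx, y, hy, hxy.ne⟩
  | succ m ih =>
    obtain ⟨x, hx⟩ := hne
    obtain ⟨y, hy, hxy⟩ := exists_adj_of_degreeIn_pos _ ((Nat.zero_le _).trans_lt (hd x hx))
    obtain ⟨i, hi⟩ : (symmDiff x y).Nonempty := card_pos.1 (kleitmanWestGraph_adj.1 hxy ▸ two_pos)
    have hxyi : i ∈ x ↔ i ∉ y := by rw [mem_symmDiff] at hi; tauto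
    have hpart (v : Finset α) (hv : v ∈ B) : 2 ^ (m + 1) ≤ #{w ∈ B | i ∈ w ↔ i ∈ v} := by
      refine ih ((filter_subset _ _).trans hB) ⟨v, mem_filter.2 ⟨hv, Iff.rfl⟩⟩ fun z hz => ?_
      obtain ⟨hzB, hzv⟩ := mem_filter.1 hz
      have hcross := degreeIn_kleitmanWestGraph_le_of_separated
        ((filter_subset (fun w => ¬(i ∈ w ↔ i ∈ v)) B).trans hB) (hB hzB)
        fun w hw => by have := (mem_filter.1 hw).2; tauto
      have hsplit :=
        degreeIn_eq_add_degreeIn_filter (kleitmanWestGraph α) B z (fun w => i ∈ w ↔ i ∈ v)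
      have := hd z hzB
      rw [mul_add_one] at this
      omega
    have hsplit : #B = #{w ∈ B | i ∈ w ↔ i ∈ x} + #{w ∈ B | i ∈ w ↔ i ∈ y} := by
      rw [← card_filter_add_card_filter_not (s := B) (fun w => i ∈ w ↔ i ∈ x)]
      congr 2
      exact filter_congr fun w _ => by tauto
    rw [pow_succ, hsplit]
    have := hpart x hx
    have := hpart y hy
    omega

-- Among sets of equal size, `#(x₀ \ y)` is the graph distance from `x₀` to `y`.
def kleitmanWestSphere (B : Finset (Finset α)) (x₀ : Finset α) (j : ℕ) : Finset (Finset α) :=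
  {y ∈ B | #(x₀ \ y) = j}

variable {x₀ : Finset α} {j : ℕ}

theorem degreeIn_le_degreeIn_kleitmanWestSphere_succ_add {y : Finset α}
    (hB : B ⊆ U.powersetCard k) (hx₀ : x₀ ∈ B) (hy : y ∈ kleitmanWestSphere B x₀ j) :
    (kleitmanWestGraph α).degreeIn B y ≤
      (kleitmanWestGraph α).degreeIn (kleitmanWestSphere B x₀ (j + 1)) y + j * #U := by
  set G := kleitmanWestGraph α
  obtain ⟨hyB, hyj⟩ := mem_filter.1 hy
  obtain ⟨hyU, hyk⟩ := mem_powersetCard.1 (hB hyB)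
  have hjy : #(y \ x₀) = j := by
    rw [← hyj, card_sdiff_comm (hyk.trans (mem_powersetCard.1 (hB hx₀)).2.symm)]
  -- A neighbour `z` of `y` misses the next sphere only if the element it drops from `y` lies
  -- outside `x₀` (`j * (#U - k)` choices) or the element it adds lies in `x₀` (`k * j` choices).
  have hcover : {z ∈ B | G.Adj y z} ⊆ {z ∈ kleitmanWestSphere B x₀ (j + 1) | G.Adj y z} ∪
      ({z ∈ B | G.Adj y z ∧ Disjoint (y \ z) x₀} ∪ {z ∈ B | G.Adj y z ∧ ¬Disjoint (z \ y) x₀}) := by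
    intro z hz
    obtain ⟨hzB, hyz⟩ := mem_filter.1 hz
    obtain ⟨h₁, -⟩ := kleitmanWestGraph.card_sdiff_eq_one_of_adj (hB hyB) (hB hzB) hyz
    simp only [kleitmanWestSphere, mem_union, mem_filter]
    by_cases hz' : #(x₀ \ z) = j + 1
    · exact .inl ⟨⟨hzB, hz'⟩, hyz⟩
    rw [← hyj, card_sdiff_eq_add_one_iff h₁] at hz'
    rcases subset_or_disjoint_of_card_eq_one x₀ h₁ with h | h
    · exact .inr (.inr ⟨hzB, hyz, fun hd => hz' ⟨h, hd⟩⟩)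
    · exact .inr (.inl ⟨hzB, hyz, h⟩)
  have hbad₁ : #{z ∈ B | G.Adj y z ∧ Disjoint (y \ z) x₀} ≤ #(y \ x₀) * #(U \ y) :=
    card_le_mul_of_sdiff_subset fun z hz => by
      obtain ⟨hzB, hyz, hdisj⟩ := mem_filter.1 hz
      obtain ⟨h₁, h₂⟩ := kleitmanWestGraph.card_sdiff_eq_one_of_adj (hB hyB) (hB hzB) hyz
      exact ⟨h₁, h₂, subset_sdiff.2 ⟨sdiff_subset, hdisj⟩,
        subset_sdiff.2 ⟨sdiff_subset.trans (mem_powersetCard.1 (hB hzB)).1, sdiff_disjoint⟩⟩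
  have hbad₂ : #{z ∈ B | G.Adj y z ∧ ¬Disjoint (z \ y) x₀} ≤ #y * #(x₀ \ y) :=
    card_le_mul_of_sdiff_subset fun z hz => by
      obtain ⟨hzB, hyz, hdisj⟩ := mem_filter.1 hz
      obtain ⟨h₁, h₂⟩ := kleitmanWestGraph.card_sdiff_eq_one_of_adj (hB hyB) (hB hzB) hyz
      have hsub := (subset_or_disjoint_of_card_eq_one x₀ h₂).resolve_right hdisj
      exact ⟨h₁, h₂, sdiff_subset, subset_sdiff.2 ⟨hsub, sdiff_disjoint⟩⟩
  calc G.degreeIn B y ≤ G.degreeIn (kleitmanWestSphere B x₀ (j + 1)) y +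
        (#{z ∈ B | G.Adj y z ∧ Disjoint (y \ z) x₀} +
          #{z ∈ B | G.Adj y z ∧ ¬Disjoint (z \ y) x₀}) :=
        (card_le_card hcover).trans <| (card_union_le _ _).trans <|
          Nat.add_le_add_left (card_union_le _ _) _
    _ ≤ G.degreeIn (kleitmanWestSphere B x₀ (j + 1)) y +
          (#(y \ x₀) * #(U \ y) + #y * #(x₀ \ y)) :=
        Nat.add_le_add_left (Nat.add_le_add hbad₁ hbad₂) _
    _ = G.degreeIn (kleitmanWestSphere B x₀ (j + 1)) y + j * #U := by
        rw [hjy, hyj, ← card_sdiff_add_card_eq_card hyU]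
        ring

theorem degreeIn_kleitmanWestSphere_le {z : Finset α} (hB : B ⊆ U.powersetCard k) (hx₀ : x₀ ∈ B)
    (hz : z ∈ kleitmanWestSphere B x₀ (j + 1)) :
    (kleitmanWestGraph α).degreeIn (kleitmanWestSphere B x₀ j) z ≤ (j + 1) ^ 2 := by
  obtain ⟨hzB, hzj⟩ := mem_filter.1 hz
  have hjz : #(z \ x₀) = j + 1 := by
    rw [← hzj, card_sdiff_comm ((mem_powersetCard.1 (hB hzB)).2.trans
      (mem_powersetCard.1 (hB hx₀)).2.symm)]
  calc _ ≤ #(z \ x₀) * #(x₀ \ z) := card_le_mul_of_sdiff_subset fun y hy => by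
        obtain ⟨hyS, hzy⟩ := mem_filter.1 hy
        obtain ⟨hyB, hyj⟩ := mem_filter.1 hyS
        obtain ⟨h₁, h₂⟩ := kleitmanWestGraph.card_sdiff_eq_one_of_adj (hB hzB) (hB hyB) hzy
        obtain ⟨hsub, hdisj⟩ := (card_sdiff_eq_add_one_iff h₂).1 (by rw [hzj, hyj])
        exact ⟨h₁, h₂, subset_sdiff.2 ⟨sdiff_subset, hdisj⟩, subset_sdiff.2 ⟨hsub, sdiff_disjoint⟩⟩
    _ = (j + 1) ^ 2 := by rw [hjz, hzj, sq]

theorem card_kleitmanWestSphere_mul_le (hB : B ⊆ U.powersetCard k) (hx₀ : x₀ ∈ B) {d : ℕ}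
    (hd : ∀ y ∈ B, d + j * #U ≤ (kleitmanWestGraph α).degreeIn B y) :
    #(kleitmanWestSphere B x₀ j) * d ≤ #(kleitmanWestSphere B x₀ (j + 1)) * (j + 1) ^ 2 := by
  refine card_mul_le_card_mul (kleitmanWestGraph α).Adj (fun y hy => ?_) (fun z hz => ?_)
  · have := degreeIn_le_degreeIn_kleitmanWestSphere_succ_add hB hx₀ hy
    have := hd y (mem_filter.1 hy).1
    change d ≤ (kleitmanWestGraph α).degreeIn (kleitmanWestSphere B x₀ (j + 1)) y
    omega
  · rw [bipartiteBelow, filter_congr fun y _ => (kleitmanWestGraph α).adj_comm y z]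
    exact degreeIn_kleitmanWestSphere_le hB hx₀ hz

theorem descFactorial_mul_pow_le_card_kleitmanWestSphere (hB : B ⊆ U.powersetCard k)
    (hx₀ : x₀ ∈ B) {m : ℕ} (hd : ∀ y ∈ B, #U * m ≤ (kleitmanWestGraph α).degreeIn B y)
    (hj : j ≤ m) : m.descFactorial j * #U ^ j ≤ j ! ^ 2 * #(kleitmanWestSphere B x₀ j) := by
  induction j with
  | zero =>
    have : (kleitmanWestSphere B x₀ 0).Nonempty := ⟨x₀, mem_filter.2 ⟨hx₀, by simp⟩⟩
    simpa using this.card_pos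
  | succ j ih =>
    have hstep := card_kleitmanWestSphere_mul_le hB hx₀ (d := (m - j) * #U) (j := j)
      fun y hy => by
        rw [← add_mul, Nat.sub_add_cancel (by omega), mul_comm]
        exact hd y hy
    calc m.descFactorial (j + 1) * #U ^ (j + 1)
        = m.descFactorial j * #U ^ j * ((m - j) * #U) := by
          rw [Nat.descFactorial_succ, pow_succ]; ring
      _ ≤ j ! ^ 2 * #(kleitmanWestSphere B x₀ j) * ((m - j) * #U) :=
          Nat.mul_le_mul_right _ (ih (by omega))
      _ ≤ j ! ^ 2 * (#(kleitmanWestSphere B x₀ (j + 1)) * (j + 1) ^ 2) := by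
          rw [mul_assoc]; gcongr
      _ = (j + 1)! ^ 2 * #(kleitmanWestSphere B x₀ (j + 1)) := by
          rw [Nat.factorial_succ]; ring

theorem pow_lt_factorial_mul_card_of_forall_le_degreeIn (hB : B ⊆ U.powersetCard k)
    (hne : B.Nonempty) {m : ℕ} (hm : 0 < m)
    (hd : ∀ y ∈ B, #U * m ≤ (kleitmanWestGraph α).degreeIn B y) : #U ^ m < m ! * #B := by
  obtain ⟨x₀, hx₀⟩ := hne
  have hchain := descFactorial_mul_pow_le_card_kleitmanWestSphere hB hx₀ hd le_rfl
  rw [Nat.descFactorial_self] at hchain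
  have hlt : #(kleitmanWestSphere B x₀ m) < #B :=
    card_lt_card (filter_ssubset.2 ⟨x₀, hx₀, by simpa using hm.ne⟩)
  refine Nat.lt_of_mul_lt_mul_left (a := m !) ?_
  calc m ! * #U ^ m ≤ m ! ^ 2 * #(kleitmanWestSphere B x₀ m) := hchain
    _ < m ! ^ 2 * #B := Nat.mul_lt_mul_of_pos_left hlt (by positivity)
    _ = m ! * (m ! * #B) := by ring

theorem card_edgesIn_kleitmanWestGraph_le_of_card_lt_two_pow
    (hA : A ⊆ U.powersetCard k) {m : ℕ} (h : #A < 2 ^ (m + 1)) :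
    #((kleitmanWestGraph α).edgesIn A) ≤ #U * m * #A := by
  by_contra! hlt
  obtain ⟨B, hBA, hne, hd⟩ := exists_subset_forall_lt_degreeIn _ hlt
  have := two_pow_le_card_of_forall_lt_degreeIn (hBA.trans hA) hne hd
  have := card_le_card hBA
  omega

theorem card_edgesIn_kleitmanWestGraph_le_of_factorial_mul_card_le
    (hA : A ⊆ U.powersetCard k) {m : ℕ} (hm : 0 < m) (h : m ! * #A ≤ #U ^ m) :
    #((kleitmanWestGraph α).edgesIn A) ≤ #U * m * #A := by
  by_contra! hlt
  obtain ⟨B, hBA, hne, hd⟩ := exists_subset_forall_lt_degreeIn _ hlt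
  have := pow_lt_factorial_mul_card_of_forall_le_degreeIn (hBA.trans hA) hne hm
    fun y hy => (hd y hy).le
  have := Nat.mul_le_mul_left (m !) (card_le_card hBA)
  omega

theorem card_edgesIn_kleitmanWestGraph_le_floor_logb (hA : A ⊆ U.powersetCard k) :
    (#((kleitmanWestGraph α).edgesIn A) : ℝ) ≤ #U * ⌊Real.logb 2 #A⌋ * #A := by
  have hfloor : ⌊Real.logb 2 #A⌋ = Nat.log 2 #A := by
    simpa using Real.floor_logb_natCast (b := 2) (r := #A) (Nat.cast_nonneg _)
  rw [hfloor]
  exact_mod_cast card_edgesIn_kleitmanWestGraph_le_of_card_lt_two_pow hA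
    (Nat.lt_pow_succ_log_self one_lt_two _)

theorem card_edgesIn_kleitmanWestGraph_le_ceil (hA : A ⊆ U.powersetCard k) (hne : A.Nonempty)
    (hL : 0 < Real.logb 2 #A) (hLU : Real.logb 2 #A < #U)
    (hc : ⌈Real.logb 2 #A / (Real.logb 2 #U - Real.logb 2 (Real.logb 2 #A))⌉ ≤
      ⌊Real.logb 2 #A⌋) :
    (#((kleitmanWestGraph α).edgesIn A) : ℝ) ≤
      #U * ⌈Real.logb 2 #A / (Real.logb 2 #U - Real.logb 2 (Real.logb 2 #A))⌉ * #A := by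
  set L := Real.logb 2 #A
  have hden : 0 < Real.logb 2 #U - Real.logb 2 L := sub_pos.2 (Real.logb_lt_logb one_lt_two hL hLU)
  have hpos := Int.ceil_pos.2 (div_pos hL hden)
  obtain ⟨m, hm⟩ := Int.eq_ofNat_of_zero_le hpos.le
  have hmL : (m : ℝ) ≤ L := by
    have := (Int.cast_le (R := ℝ)).2 (hm ▸ hc)
    push_cast at this
    exact this.trans (Int.floor_le L)
  have hfac : (m ! : ℝ) ≤ L ^ m :=
    calc (m ! : ℝ) ≤ (m : ℝ) ^ m := by exact_mod_cast Nat.factorial_le_pow m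
      _ ≤ L ^ m := pow_le_pow_left₀ (Nat.cast_nonneg m) hmL m
  have hpow := Real.pow_logb_mul_le_pow_of_div_le one_lt_two (by exact_mod_cast hne.card_pos) hL
    (hL.trans hLU) hden (hm ▸ Int.le_ceil _)
  rw [hm]
  exact_mod_cast card_edgesIn_kleitmanWestGraph_le_of_factorial_mul_card_le hA (by omega)
    (by exact_mod_cast (mul_le_mul_of_nonneg_right hfac (Nat.cast_nonneg _)).trans hpow)

end KleitmanWest

theorem stmt14 (n k : ℕ) (A : Finset (Finset ℕ)) (hA : A.Nonempty)
    (hsub : ∀ x ∈ A, x ⊆ Finset.Icc 1 n ∧ x.card = k)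
    (h1 : 1 ≤ Real.logb 2 A.card) (h2 : Real.logb 2 A.card < n) :
    ({e : Sym2 (Finset ℕ) | ∃ x ∈ A, ∃ y ∈ A,
        e = s(x, y) ∧ (symmDiff x y).card = 2}.ncard : ℝ)
      ≤ (n : ℝ) *
        min (⌈Real.logb 2 A.card / (Real.logb 2 n - Real.logb 2 (Real.logb 2 A.card))⌉ : ℝ)
          (⌊Real.logb 2 A.card⌋ : ℝ)
        * A.card := by
  have hAU : A ⊆ (Icc 1 n).powersetCard k := fun x hx => mem_powersetCard.2 (hsub x hx)
  have hE := (kleitmanWestGraph ℕ).coe_edgesIn A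
  simp only [kleitmanWestGraph_adj] at hE
  have hU : #(Icc 1 n) = n := by simp
  rw [← hE, Set.ncard_coe_finset]
  rw [← hU] at h2 ⊢
  rcases le_total ⌈Real.logb 2 #A / (Real.logb 2 #(Icc 1 n) - Real.logb 2 (Real.logb 2 #A))⌉
    ⌊Real.logb 2 #A⌋ with hc | hc
  · rw [min_eq_left (Int.cast_le.2 hc)]
    exact card_edgesIn_kleitmanWestGraph_le_ceil hAU hA (one_pos.trans_le h1) h2 hc
  · rw [min_eq_right (Int.cast_le.2 hc)]
    exact card_edgesIn_kleitmanWestGraph_le_floor_logb hAU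
end

section
/- Let A ⊆ P([n]) be a left-compressed down-set with |A| ≥ 2 and n ≥ 2. Set ℓ = min{ ⌈ 2·log₂|A| / (log₂ n − log₂ log₂ |A|) ⌉, ⌊log₂ |A|⌋ } and β = ⌊ (n / log₂|A|)^{1/2} · ℓ ⌋. Then for every x ∈ A, the number of elements of x that exceed β is at most ℓ, i.e. |x ∩ {β+1, …, n}| ≤ ℓ. -/
/-!
Let `T ⊆ x` consist of `ℓ` elements above `β`. Every `ℓ`-subset `S` of `{1, …, β + 1}` lies
below `T` elementwise (everything in `S \ T` is smaller than everything in `T \ S`), so a chain of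
left compressions followed by passing to a subset carries `T` to `S`, and `A` contains all of
them. Hence `|A| ≥ C(β + 1, ℓ) ≥ ((β + 1) / ℓ)^ℓ > s^ℓ` with `s = √(n / log₂ |A|)`, whereas
`ℓ ≥ 2 log₂ |A| / (log₂ n - log₂ log₂ |A|)` is exactly what makes `s^ℓ ≥ |A|`. When instead
`ℓ = ⌊log₂ |A|⌋`, the bound is `|x| ≤ log₂ |A|`, as `A` contains the power set of `x`.
-/

open Finset Real

namespace Nat

variable {α : Type*} [Semifield α] [LinearOrder α] [IsStrictOrderedRing α]

theorem pow_mul_factorial_le_pow_mul_descFactorial {m l : ℕ} (h : l ≤ m) :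
    m ^ l * l ! ≤ l ^ l * m.descFactorial l := by
  have hpow (c : ℕ) : c ^ l = ∏ _ ∈ range l, c := by simp
  rw [← descFactorial_self, descFactorial_eq_prod_range, descFactorial_eq_prod_range, hpow m,
    hpow l, ← prod_mul_distrib, ← prod_mul_distrib]
  refine prod_le_prod' fun i _ => ?_
  rw [Nat.mul_sub, Nat.mul_sub, mul_comm m l]
  exact Nat.sub_le_sub_left (Nat.mul_le_mul_right i h) _

theorem div_pow_le_choose {m l : ℕ} (h : l ≤ m) : ((m : α) / l) ^ l ≤ m.choose l := by
  rcases l.eq_zero_or_pos with rfl | hl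
  · simp
  have hfac : (0 : α) < l ! := mod_cast l.factorial_pos
  rw [div_pow, div_le_iff₀ (by positivity), ← mul_le_mul_iff_of_pos_right hfac]
  calc (m : α) ^ l * l ! ≤ l ^ l * m.descFactorial l := mod_cast
        pow_mul_factorial_le_pow_mul_descFactorial h
    _ = m.choose l * l ^ l * l ! := by
        rw [descFactorial_eq_factorial_mul_choose]; push_cast; ring

theorem pow_lt_choose_of_mul_lt {s : ℝ} (hs : 1 ≤ s) {l m : ℕ} (hl : 0 < l) (hm : s * l < m) :
    s ^ l < m.choose l := by
  have hlR : (0 : ℝ) < l := mod_cast hl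
  have hsm : s < m / l := (lt_div_iff₀ hlR).mpr hm
  have hlm : l ≤ m := by exact_mod_cast (le_mul_of_one_le_left hlR.le hs).trans hm.le
  exact (pow_lt_pow_left₀ hsm (by linarith) hl.ne').trans_le (div_pow_le_choose hlm)

end Nat

namespace Finset

variable {α : Type*} [DecidableEq α] {S T : Finset α} {i j : α}

theorem sdiff_insert_erase_of_notMem (hj : j ∉ S) :
    S \ insert i (T.erase j) = (S \ T).erase i := by
  ext e; simp only [mem_sdiff, mem_erase, mem_insert]; grind

theorem insert_erase_sdiff_of_mem (hi : i ∈ S) : insert i (T.erase j) \ S = (T \ S).erase j := by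
  ext e; simp only [mem_sdiff, mem_erase, mem_insert]; grind

end Finset

theorem logb_sqrt_pow {b y : ℝ} (hy : 0 ≤ y) (l : ℕ) : logb b (√y ^ l) = l * logb b y / 2 := by
  rw [logb_pow, logb, logb, log_sqrt hy]; ring

theorem le_sqrt_div_logb_pow {a N : ℝ} (ha : 1 < a) (hN : 0 < N)
    (hD : logb 2 (logb 2 a) < logb 2 N) {l : ℕ}
    (hl : 2 * logb 2 a / (logb 2 N - logb 2 (logb 2 a)) ≤ l) :
    a ≤ √(N / logb 2 a) ^ l := by
  have hL : 0 < logb 2 a := logb_pos one_lt_two ha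
  rw [div_le_iff₀ (sub_pos.mpr hD)] at hl
  rw [← logb_le_logb (b := 2) one_lt_two (by linarith) (by positivity),
    logb_sqrt_pow (by positivity), logb_div hN.ne' hL.ne']
  linarith

theorem one_le_sqrt_div_logb {a N : ℝ} (ha : 1 < a) (hN : 0 < N)
    (hD : logb 2 (logb 2 a) < logb 2 N) : 1 ≤ √(N / logb 2 a) := by
  have hL : 0 < logb 2 a := logb_pos one_lt_two ha
  rw [logb_lt_logb_iff one_lt_two hL hN] at hD
  exact one_le_sqrt.mpr ((one_le_div hL).mpr hD.le)

section LeftCompressed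

variable {n : ℕ} {A : Finset (Finset ℕ)}

theorem two_pow_card_le_card_of_mem (hdown : ∀ x ∈ A, ∀ y ⊆ x, y ∈ A) {x : Finset ℕ}
    (hx : x ∈ A) : 2 ^ #x ≤ #A := by
  simpa using card_le_card fun y hy => hdown x hx y (mem_powerset.mp hy)

theorem card_le_floor_logb_of_mem (hdown : ∀ x ∈ A, ∀ y ⊆ x, y ∈ A) {x : Finset ℕ}
    (hx : x ∈ A) : (#x : ℤ) ≤ ⌊logb 2 #A⌋ := by
  have hA : (0 : ℝ) < #A := mod_cast card_pos.mpr ⟨x, hx⟩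
  rw [Int.le_floor, Int.cast_natCast, le_logb_iff_rpow_le one_lt_two hA, rpow_natCast]
  exact_mod_cast two_pow_card_le_card_of_mem hdown hx

variable (hsub : ∀ x ∈ A, x ⊆ Icc 1 n) (hdown : ∀ x ∈ A, ∀ y ⊆ x, y ∈ A)
  (hcomp : ∀ i j : ℕ, 1 ≤ i → i < j → j ≤ n →
    ∀ x ∈ A, j ∈ x → i ∉ x → insert i (x.erase j) ∈ A)
include hsub hdown hcomp

theorem mem_of_forall_sdiff_lt {S T : Finset ℕ} (hT : T ∈ A) (hS : 0 ∉ S) (hcard : #S ≤ #T)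
    (hlt : ∀ i ∈ S \ T, ∀ j ∈ T \ S, i < j) : S ∈ A := by
  induction hk : #(S \ T) generalizing T with
  | zero => exact hdown T hT S (sdiff_eq_empty_iff_subset.mp (card_eq_zero.mp hk))
  | succ k ih =>
    obtain ⟨i, hi⟩ : (S \ T).Nonempty := card_pos.mp (by omega)
    obtain ⟨j, hj⟩ : (T \ S).Nonempty :=
      card_pos.mp ((card_pos.mpr ⟨i, hi⟩).trans_le (card_sdiff_le_card_sdiff_iff.mpr hcard))
    have hi' := mem_sdiff.mp hi
    have hj' := mem_sdiff.mp hj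
    have hST := sdiff_insert_erase_of_notMem (i := i) (T := T) hj'.2
    have hTS := insert_erase_sdiff_of_mem (j := j) (T := T) hi'.1
    refine ih (hcomp i j (pos_of_ne_zero (ne_of_mem_of_not_mem hi'.1 hS)) (hlt i hi j hj)
      (mem_Icc.mp (hsub T hT hj'.1)).2 T hT hj'.1 hi'.2) ?_ ?_ ?_
    · rwa [card_insert_of_notMem (fun h => hi'.2 (mem_of_mem_erase h)),
        card_erase_add_one hj'.1]
    · rw [hST, hTS]
      exact fun a ha b hb => hlt a (mem_of_mem_erase ha) b (mem_of_mem_erase hb)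
    · rw [hST, card_erase_of_mem hi, hk, Nat.add_sub_cancel]

theorem choose_le_card_of_le_card_filter_lt {x : Finset ℕ} (hx : x ∈ A) {b l : ℕ}
    (hl : l ≤ #(x.filter (b < ·))) : (b + 1).choose l ≤ #A := by
  obtain ⟨T, hTx, rfl⟩ := exists_subset_card_eq hl
  have hT : T ∈ A := hdown x hx T (hTx.trans (filter_subset _ _))
  calc (b + 1).choose #T = #((Icc 1 (b + 1)).powersetCard #T) := by simp
    _ ≤ #A := card_le_card fun S hS => ?_
  obtain ⟨hSsub, hScard⟩ := mem_powersetCard.mp hS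
  refine mem_of_forall_sdiff_lt hsub hdown hcomp hT (fun h => by simpa using hSsub h)
    hScard.le fun i hi j hj => ?_
  have hib : i ≤ b + 1 := (mem_Icc.mp (hSsub (mem_sdiff.mp hi).1)).2
  have hbj : b < j := (mem_filter.mp (hTx (mem_sdiff.mp hj).1)).2
  have hij : i ≠ j := ne_of_mem_of_not_mem (mem_sdiff.mp hi).1 (mem_sdiff.mp hj).2
  omega

theorem card_filter_floor_lt_lt (hn : 0 < n) (hA : 2 ≤ #A) {x : Finset ℕ} (hx : x ∈ A)
    (hD : logb 2 (logb 2 #A) < logb 2 n) {l : ℕ} (hl : 0 < l)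
    (hlD : 2 * logb 2 #A / (logb 2 n - logb 2 (logb 2 #A)) ≤ l) :
    #(x.filter fun j : ℕ => ⌊√(n / logb 2 #A) * l⌋ < (j : ℤ)) < l := by
  have hA1 : (1 : ℝ) < #A := by exact_mod_cast hA
  have hnR : (0 : ℝ) < n := mod_cast hn
  set s := √(n / logb 2 #A)
  have hs : 1 ≤ s := one_le_sqrt_div_logb hA1 hnR hD
  obtain ⟨b, hb⟩ : ∃ b : ℕ, ⌊s * l⌋ = b := Int.eq_ofNat_of_zero_le (by positivity)
  have hsb : s * l < (b + 1 : ℕ) := by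
    push_cast; exact_mod_cast hb ▸ Int.lt_floor_add_one (s * l)
  simp only [hb, Nat.cast_lt]
  by_contra! hcard
  have hchoose := choose_le_card_of_le_card_filter_lt hsub hdown hcomp hx hcard
  have := (le_sqrt_div_logb_pow hA1 hnR hD hlD).trans_lt (Nat.pow_lt_choose_of_mul_lt hs hl hsb)
  exact this.not_ge (mod_cast hchoose)

end LeftCompressed

theorem stmt17 (n : ℕ) (hn : 2 ≤ n) (A : Finset (Finset ℕ))
    (hsub : ∀ x ∈ A, x ⊆ Finset.Icc 1 n)
    (hdown : ∀ x ∈ A, ∀ y ⊆ x, y ∈ A)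
    (hcomp : ∀ i j : ℕ, 1 ≤ i → i < j → j ≤ n →
      ∀ x ∈ A, j ∈ x → i ∉ x → insert i (x.erase j) ∈ A)
    (hA2 : 2 ≤ A.card) :
    ∀ x ∈ A,
      ((x.filter (fun j : ℕ =>
          (⌊Real.sqrt ((n : ℝ) / Real.logb 2 A.card) *
            (if Real.logb 2 (Real.logb 2 A.card) < Real.logb 2 n then
              min (⌈2 * Real.logb 2 A.card /
                    (Real.logb 2 n - Real.logb 2 (Real.logb 2 A.card))⌉ : ℝ)
                (⌊Real.logb 2 A.card⌋ : ℝ)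
            else (⌊Real.logb 2 A.card⌋ : ℝ))⌋ : ℤ) < (j : ℤ))).card : ℝ)
      ≤ (if Real.logb 2 (Real.logb 2 A.card) < Real.logb 2 n then
          min (⌈2 * Real.logb 2 A.card /
                (Real.logb 2 n - Real.logb 2 (Real.logb 2 A.card))⌉ : ℝ)
            (⌊Real.logb 2 A.card⌋ : ℝ)
        else (⌊Real.logb 2 A.card⌋ : ℝ)) := by
  intro x hx
  have hfloor (p : ℕ → Prop) [DecidablePred p] : (#(x.filter p) : ℝ) ≤ (⌊logb 2 #A⌋ : ℝ) :=
    mod_cast (Int.ofNat_le.mpr (card_filter_le x p)).trans (card_le_floor_logb_of_mem hdown hx)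
  split_ifs with hD
  · have hpos : 0 < 2 * logb 2 (#A : ℝ) / (logb 2 n - logb 2 (logb 2 #A)) :=
      div_pos (mul_pos two_pos (logb_pos one_lt_two (mod_cast hA2))) (sub_pos.mpr hD)
    obtain ⟨l, hl⟩ := Int.eq_ofNat_of_zero_le (Int.ceil_pos.mpr hpos).le
    have hl0 : 0 < l := by have := Int.ceil_pos.mpr hpos; omega
    have hceil := Int.le_ceil (2 * logb 2 (#A : ℝ) / (logb 2 n - logb 2 (logb 2 #A)))
    rw [hl, Int.cast_natCast] at hceil
    rw [hl]
    rcases min_cases ((l : ℤ) : ℝ) (⌊logb 2 (#A : ℝ)⌋ : ℝ) with ⟨hmin, -⟩ | ⟨hmin, -⟩ <;>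
      rw [hmin]
    · simp only [Int.cast_natCast, Nat.cast_le]
      exact (card_filter_floor_lt_lt hsub hdown hcomp (by omega) hA2 hx hD hl0 hceil).le
    · exact hfloor _
  · exact hfloor _
end
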